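/- Let y_0, t_0 and t be natural numbers with t >= t_0. If every colouring f_0 of H_{2t_0+2} with t_{f_0} = t_0 satisfies winst(f_0) >= y_0, then every colouring f of H_{2t+2} with t_f = t satisfies winst(f) >= y_0 + t - t_0; that is, if winst(2t_0+2, t_0) >= y_0 then winst(2t+2, t) >= y_0 + t - t_0. -/

import Mathlib

open Finset

/-- The number of entries of a point of the hypercube equal to `1` (`true`). -/
def onesCount {n : ℕ} (x : Fin n → Bool) : ℕ :=
  (univ.filter fun i => x i = true).card

/-- The number of entries of a point of the hypercube equal to `0` (`false`). -/
def zerosCount {n : ℕ} (x : Fin n → Bool) : ℕ :=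
  (univ.filter fun i => x i = false).card

/-- `P` is a geodesic in the `n`-hypercube: consecutive points differ in exactly one
entry, and each of the `n` entries changes at exactly one step. -/
def IsGeodesic {n : ℕ} (P : Fin (n+1) → Fin n → Bool) : Prop :=
  ∃ σ : Equiv.Perm (Fin n), ∀ j : Fin n, ∀ ℓ : Fin n,
    P j.succ ℓ = if σ ℓ = j then !(P j.castSucc ℓ) else P j.castSucc ℓ

/-- The number of jumps of the geodesic `P` in the colouring `f`. -/
def jumps {n : ℕ} (f : (Fin n → Bool) → Bool) (P : Fin (n+1) → Fin n → Bool) : ℕ :=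
  (univ.filter fun j : Fin n => f (P j.succ) ≠ f (P j.castSucc)).card

/-- `inst f` is the maximum of `jumps f P` over all geodesics `P`. -/
noncomputable def inst {n : ℕ} (f : (Fin n → Bool) → Bool) : ℕ :=
  sSup {m | ∃ P : Fin (n+1) → Fin n → Bool, IsGeodesic P ∧ m = jumps f P}

/-- `f` respects the balls `B_t(0^n)` and `B_t(1^n)`: it is `0` on all points with at
most `t` ones and `1` on all points with at most `t` zeros. -/
def Respects {n : ℕ} (t : ℕ) (f : (Fin n → Bool) → Bool) : Prop :=
  (∀ x, onesCount x ≤ t → f x = false) ∧ (∀ x, zerosCount x ≤ t → f x = true)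

/-- `t_f = t`: `t` is the largest radius whose balls `f` respects. -/
def tfEq {n : ℕ} (f : (Fin n → Bool) → Bool) (t : ℕ) : Prop :=
  Respects t f ∧ ¬ Respects (t+1) f

/-- `winst t f`: the maximum number of jumps of `f` over all well-ending
`(t+1)`-geodesics (those starting with exactly `t+1` ones, whose first point has
colour `1` or whose last point has colour `0`). -/
noncomputable def winst {n : ℕ} (t : ℕ) (f : (Fin n → Bool) → Bool) : ℕ :=
  sSup {m | ∃ P : Fin (n+1) → Fin n → Bool, IsGeodesic P ∧ onesCount (P 0) = t + 1 ∧
    (f (P 0) = true ∨ f (P (Fin.last n)) = false) ∧ m = jumps f P}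


/-! Restrict a colouring `f` of `H_{2t+4}` with `t_f = t + 1` to the subcube on which the last two
coordinates are `(1, 0)`: this gives a colouring `g` of `H_{2t+2}` with `t_g = t`. Take a
well-ending `(t+1)`-geodesic `P` with the most jumps of `g`. If `P` ends in colour `1` (so it also
starts in colour `1`), append the steps `(1,0) → (0,0) → (0,1)` in the last two coordinates;
otherwise prepend `(0,1) → (b,b) → (1,0)` with `b` opposite to the colour of the start of `P`.
Either way we get a well-ending `(t+2)`-geodesic of `f` with one more jump, because `f` equals `b`
at `(x, b, b)` whenever `x` has exactly `t + 1` ones. Hence `winst` grows by at least one from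
`t` to `t + 1`, and the theorem follows by induction on `t - t₀`. -/

lemma card_filter_append {α : Type*} {m k : ℕ} (p : α → Prop) [DecidablePred p]
    (x : Fin m → α) (y : Fin k → α) :
    #{i | p (Fin.append x y i)} = #{i | p (x i)} + #{i | p (y i)} := by
  simp only [card_filter, Fin.sum_univ_add, Fin.append_left, Fin.append_right]

lemma onesCount_append {m k : ℕ} (x : Fin m → Bool) (y : Fin k → Bool) :
    onesCount (Fin.append x y) = onesCount x + onesCount y :=
  card_filter_append (· = true) x y

lemma zerosCount_append {m k : ℕ} (x : Fin m → Bool) (y : Fin k → Bool) :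
    zerosCount (Fin.append x y) = zerosCount x + zerosCount y :=
  card_filter_append (· = false) x y

lemma onesCount_add_zerosCount {n : ℕ} (x : Fin n → Bool) :
    onesCount x + zerosCount x = n := by
  simpa [onesCount, zerosCount] using card_filter_add_card_filter_not (s := univ) (x · = true)

lemma onesCount_not {n : ℕ} (x : Fin n → Bool) : onesCount (fun i => !x i) = zerosCount x := by
  simp [onesCount, zerosCount]

lemma exists_onesCount_eq {n k : ℕ} (hk : k ≤ n) : ∃ x : Fin n → Bool, onesCount x = k :=
  ⟨fun i => decide ((i : ℕ) < k), by simp [onesCount, Fin.card_filter_val_lt, hk]⟩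

lemma jumps_le {n : ℕ} (f : (Fin n → Bool) → Bool) (P : Fin (n+1) → Fin n → Bool) :
    jumps f P ≤ n :=
  (card_filter_le _ _).trans_eq (card_fin n)

lemma jumps_pos_of_ne {n : ℕ} {f : (Fin n → Bool) → Bool} {P : Fin (n+1) → Fin n → Bool}
    {i j : Fin (n+1)} (h : f (P i) ≠ f (P j)) : 0 < jumps f P := by
  by_contra! h0
  have hstep : ∀ s : Fin n, f (P s.succ) = f (P s.castSucc) := by
    simpa [jumps, filter_eq_empty_iff] using h0
  have hconst : ∀ s, f (P s) = f (P 0) :=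
    fun s => Fin.induction rfl (fun s ih => (hstep s).trans ih) s
  exact h ((hconst i).trans (hconst j).symm)

lemma jumps_comp_rev {n : ℕ} (f : (Fin n → Bool) → Bool) (P : Fin (n+1) → Fin n → Bool) :
    jumps f (P ∘ Fin.rev) = jumps f P := by
  refine card_equiv Fin.revPerm fun j => ?_
  simp [Fin.rev_succ, Fin.rev_castSucc, ne_comm]

lemma IsGeodesic.comp_rev {n : ℕ} {P : Fin (n+1) → Fin n → Bool} (hP : IsGeodesic P) :
    IsGeodesic (P ∘ Fin.rev) := by
  obtain ⟨σ, hσ⟩ := hP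
  refine ⟨σ.trans Fin.revPerm, fun j ℓ => ?_⟩
  have := hσ j.rev ℓ
  simp only [Function.comp_apply, Fin.rev_succ, Fin.rev_castSucc, Equiv.trans_apply,
    Fin.revPerm_apply, Fin.rev_eq_iff]
  split_ifs at this ⊢ <;> simp [this]

def flipWalk {n : ℕ} (x : Fin n → Bool) (σ : Equiv.Perm (Fin n)) :
    Fin (n+1) → Fin n → Bool :=
  fun j ℓ => xor (x ℓ) (decide ((σ ℓ).castSucc < j))

lemma flipWalk_zero {n : ℕ} (x : Fin n → Bool) (σ : Equiv.Perm (Fin n)) :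
    flipWalk x σ 0 = x := by
  funext ℓ; simp [flipWalk]

lemma flipWalk_last {n : ℕ} (x : Fin n → Bool) (σ : Equiv.Perm (Fin n)) :
    flipWalk x σ (Fin.last n) = fun ℓ => !x ℓ := by
  funext ℓ; simp [flipWalk, Fin.castSucc_lt_last]

lemma flipWalk_succ {n : ℕ} (x : Fin n → Bool) (σ : Equiv.Perm (Fin n)) (j ℓ : Fin n) :
    flipWalk x σ j.succ ℓ =
      if σ ℓ = j then !(flipWalk x σ j.castSucc ℓ) else flipWalk x σ j.castSucc ℓ := by
  by_cases h : σ ℓ = j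
  · simp [flipWalk, h]
  · have : (σ ℓ).castSucc < j.succ ↔ (σ ℓ).castSucc < j.castSucc := by
      rw [Fin.castSucc_lt_succ_iff, Fin.castSucc_lt_castSucc_iff, le_iff_lt_or_eq, or_iff_left h]
    simp [flipWalk, h, this]

lemma isGeodesic_flipWalk {n : ℕ} (x : Fin n → Bool) (σ : Equiv.Perm (Fin n)) :
    IsGeodesic (flipWalk x σ) :=
  ⟨σ, flipWalk_succ x σ⟩

lemma IsGeodesic.exists_eq_flipWalk {n : ℕ} {P : Fin (n+1) → Fin n → Bool}
    (hP : IsGeodesic P) :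
    ∃ σ : Equiv.Perm (Fin n), P = flipWalk (P 0) σ := by
  obtain ⟨σ, hσ⟩ := hP
  refine ⟨σ, funext fun j => ?_⟩
  induction j using Fin.induction with
  | zero => rw [flipWalk_zero]
  | succ j ih => funext ℓ; rw [hσ, flipWalk_succ, ih]

lemma IsGeodesic.last_eq {n : ℕ} {P : Fin (n+1) → Fin n → Bool} (hP : IsGeodesic P) :
    P (Fin.last n) = fun ℓ => !P 0 ℓ := by
  obtain ⟨σ, hσ⟩ := hP.exists_eq_flipWalk
  rw [hσ, flipWalk_last, flipWalk_zero]

section appendWalk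

variable {m k : ℕ} (P : Fin (m+1) → Fin m → Bool) (Q : Fin (k+1) → Fin k → Bool)

def appendWalk : Fin (m+k+1) → Fin (m+k) → Bool :=
  fun j => if h : (j : ℕ) ≤ m then Fin.append (P ⟨j, by omega⟩) (Q 0)
    else Fin.append (P (Fin.last m)) (Q ⟨j - m, by omega⟩)

lemma appendWalk_of_le (j : Fin (m+k+1)) (h : (j : ℕ) ≤ m) :
    appendWalk P Q j = Fin.append (P ⟨j, by omega⟩) (Q 0) := dif_pos h

lemma appendWalk_of_ge (j : Fin (m+k+1)) (h : m ≤ (j : ℕ)) :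
    appendWalk P Q j = Fin.append (P (Fin.last m)) (Q ⟨j - m, by omega⟩) := by
  unfold appendWalk
  split_ifs with h'
  · congr 2 <;> ext <;> simp <;> omega
  · rfl

lemma appendWalk_zero : appendWalk P Q 0 = Fin.append (P 0) (Q 0) :=
  appendWalk_of_le P Q 0 (Nat.zero_le m)

lemma appendWalk_last :
    appendWalk P Q (Fin.last (m+k)) = Fin.append (P (Fin.last m)) (Q (Fin.last k)) := by
  rw [appendWalk_of_ge P Q _ (by simp)]
  congr 2; ext; simp

lemma appendWalk_castAdd_castSucc (i : Fin m) :
    appendWalk P Q (Fin.castAdd k i).castSucc = Fin.append (P i.castSucc) (Q 0) := by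
  rw [appendWalk_of_le P Q _ (by simp)]; rfl

lemma appendWalk_castAdd_succ (i : Fin m) :
    appendWalk P Q (Fin.castAdd k i).succ = Fin.append (P i.succ) (Q 0) := by
  rw [appendWalk_of_le P Q _ (by simp)]; rfl

lemma appendWalk_natAdd_castSucc (i : Fin k) :
    appendWalk P Q (Fin.natAdd m i).castSucc = Fin.append (P (Fin.last m)) (Q i.castSucc) := by
  rw [appendWalk_of_ge P Q _ (by simp)]
  congr 2; ext; simp

lemma appendWalk_natAdd_succ (i : Fin k) :
    appendWalk P Q (Fin.natAdd m i).succ = Fin.append (P (Fin.last m)) (Q i.succ) := by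
  rw [appendWalk_of_ge P Q _ (by simp; omega)]
  congr 2; ext; simp; omega

lemma jumps_appendWalk (f : (Fin (m+k) → Bool) → Bool) :
    jumps f (appendWalk P Q) = jumps (fun x => f (Fin.append x (Q 0))) P +
      jumps (fun y => f (Fin.append (P (Fin.last m)) y)) Q := by
  simp only [jumps, card_filter, Fin.sum_univ_add, appendWalk_castAdd_castSucc,
    appendWalk_castAdd_succ, appendWalk_natAdd_castSucc, appendWalk_natAdd_succ]

variable {P Q} in
lemma IsGeodesic.appendWalk (hP : IsGeodesic P) (hQ : IsGeodesic Q) :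
    IsGeodesic (appendWalk P Q) := by
  obtain ⟨σ, hσ⟩ := hP
  obtain ⟨τ, hτ⟩ := hQ
  refine ⟨finSumFinEquiv.permCongr (σ.sumCongr τ), fun j ℓ => ?_⟩
  induction j using Fin.addCases with
  | left i =>
    rw [appendWalk_castAdd_succ, appendWalk_castAdd_castSucc]
    induction ℓ using Fin.addCases with
    | left a => simp [hσ]
    | right r => simp [Fin.ext_iff]; omega
  | right i =>
    rw [appendWalk_natAdd_succ, appendWalk_natAdd_castSucc]
    induction ℓ using Fin.addCases with
    | left a => simp [Fin.ext_iff]; omega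
    | right r => simp [hτ]

end appendWalk

def cornerWalk (b : Bool) : Fin (2+1) → Fin 2 → Bool :=
  ![![true, false], ![b, b], ![false, true]]

@[simp] lemma cornerWalk_zero (b : Bool) : cornerWalk b 0 = ![true, false] := rfl

@[simp] lemma cornerWalk_one (b : Bool) : cornerWalk b 1 = ![b, b] := rfl

@[simp] lemma cornerWalk_two (b : Bool) : cornerWalk b 2 = ![false, true] := rfl

lemma isGeodesic_cornerWalk (b : Bool) : IsGeodesic (cornerWalk b) := by
  unfold IsGeodesic cornerWalk; cases b <;> decide

lemma le_winst {n t : ℕ} {f : (Fin n → Bool) → Bool} {P : Fin (n+1) → Fin n → Bool}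
    (hP : IsGeodesic P) (hstart : onesCount (P 0) = t + 1)
    (hwell : f (P 0) = true ∨ f (P (Fin.last n)) = false) : jumps f P ≤ winst t f :=
  le_csSup ⟨n, by rintro _ ⟨Q, -, -, -, rfl⟩; exact jumps_le f Q⟩ ⟨P, hP, hstart, hwell, rfl⟩

lemma exists_winst_eq {t : ℕ} (f : (Fin (2*t+2) → Bool) → Bool) :
    ∃ P : Fin (2*t+2+1) → Fin (2*t+2) → Bool, IsGeodesic P ∧ onesCount (P 0) = t + 1 ∧
      (f (P 0) = true ∨ f (P (Fin.last _)) = false) ∧ winst t f = jumps f P := by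
  obtain ⟨x, hx⟩ := exists_onesCount_eq (show t + 1 ≤ 2*t+2 by omega)
  have hxc : onesCount (fun i => !x i) = t + 1 := by
    have := onesCount_add_zerosCount x
    rw [onesCount_not]; omega
  obtain ⟨P, hP, hstart, hwell⟩ : ∃ P : Fin (2*t+2+1) → Fin (2*t+2) → Bool, IsGeodesic P ∧
      onesCount (P 0) = t + 1 ∧ (f (P 0) = true ∨ f (P (Fin.last _)) = false) := by
    cases hfx : f x
    · refine ⟨flipWalk (fun i => !x i) 1, isGeodesic_flipWalk _ 1, ?_, Or.inr ?_⟩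
      · rwa [flipWalk_zero]
      · simpa [flipWalk_last] using hfx
    · exact ⟨flipWalk x 1, isGeodesic_flipWalk _ 1, by rwa [flipWalk_zero],
        Or.inl (by rwa [flipWalk_zero])⟩
  show winst t f ∈ {m | ∃ P : Fin (2*t+2+1) → Fin (2*t+2) → Bool, IsGeodesic P ∧
    onesCount (P 0) = t + 1 ∧ (f (P 0) = true ∨ f (P (Fin.last _)) = false) ∧ m = jumps f P}
  exact Nat.sSup_mem ⟨_, P, hP, hstart, hwell, rfl⟩
    ⟨2*t+2, by rintro _ ⟨Q, -, -, -, rfl⟩; exact jumps_le f Q⟩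

lemma Respects.restrict {n t : ℕ} {f : (Fin (n+2) → Bool) → Bool} (hf : Respects (t+1) f) :
    Respects t (fun x => f (Fin.append x ![true, false])) := by
  constructor <;> intro x hx
  · exact hf.1 _ (by rw [onesCount_append]; change _ + 1 ≤ _; omega)
  · exact hf.2 _ (by rw [zerosCount_append]; change _ + 1 ≤ _; omega)

lemma not_respects_succ {t : ℕ} (g : (Fin (2*t+2) → Bool) → Bool) : ¬ Respects (t+1) g := by
  rintro ⟨hzero, hone⟩
  obtain ⟨x, hx⟩ := exists_onesCount_eq (show t + 1 ≤ 2*t+2 by omega)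
  have := onesCount_add_zerosCount x
  simpa [hzero x hx.le] using hone x (by omega)

lemma Respects.apply_append_diag {t : ℕ} {f : (Fin (2*t+2+2) → Bool) → Bool}
    (hf : Respects (t+1) f) {x : Fin (2*t+2) → Bool} (hx : onesCount x = t + 1) (b : Bool) :
    f (Fin.append x ![b, b]) = b := by
  have := onesCount_add_zerosCount x
  cases b
  · exact hf.1 _ (by rw [onesCount_append]; change _ + 0 ≤ _; omega)
  · exact hf.2 _ (by rw [zerosCount_append]; change _ + 0 ≤ _; omega)

section extension

variable {t : ℕ} {f : (Fin (2*t+2+2) → Bool) → Bool} {P : Fin (2*t+2+1) → Fin (2*t+2) → Bool}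

lemma add_one_le_winst_of_last_true (hf : Respects (t+1) f) (hP : IsGeodesic P)
    (hstart : onesCount (P 0) = t + 1)
    (hlast : f (Fin.append (P (Fin.last _)) ![true, false]) = true)
    (hfirst : f (Fin.append (P 0) ![true, false]) = true) :
    jumps (fun x => f (Fin.append x ![true, false])) P + 1 ≤ winst (t+1) f := by
  have hend : onesCount (P (Fin.last _)) = t + 1 := by
    have := onesCount_add_zerosCount (P 0)
    rw [hP.last_eq, onesCount_not]; omega
  have hjump : 0 < jumps (fun y => f (Fin.append (P (Fin.last _)) y)) (cornerWalk false) :=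
    jumps_pos_of_ne (i := 0) (j := 1) (by simp [hf.apply_append_diag hend, hlast])
  calc _ ≤ _ := Nat.add_le_add_left hjump _
    _ = jumps f (appendWalk (m := 2*t+2) P (cornerWalk false)) := by
      rw [jumps_appendWalk, cornerWalk_zero]
    _ ≤ winst (t+1) f := by
      refine le_winst (hP.appendWalk (isGeodesic_cornerWalk false)) ?_ (Or.inl ?_)
      · rw [appendWalk_zero, onesCount_append, hstart]; rfl
      · simpa [appendWalk_zero] using hfirst

lemma add_one_le_winst_of_last_false (hf : Respects (t+1) f) (hP : IsGeodesic P)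
    (hstart : onesCount (P 0) = t + 1)
    (hlast : f (Fin.append (P (Fin.last _)) ![true, false]) = false) :
    jumps (fun x => f (Fin.append x ![true, false])) P + 1 ≤ winst (t+1) f := by
  set b := !f (Fin.append (P 0) ![true, false])
  have hjump : 0 < jumps (fun y => f (Fin.append (P 0) y)) (cornerWalk b) :=
    jumps_pos_of_ne (i := 0) (j := 1) (by simp [hf.apply_append_diag hstart, b])
  -- `W ∘ Fin.rev` is `P` with the corner walk reversed and prepended.
  let W := appendWalk (m := 2*t+2) (P ∘ Fin.rev) (cornerWalk b)
  calc _ ≤ _ := Nat.add_le_add_left hjump _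
    _ = jumps f W := by
      rw [jumps_appendWalk, cornerWalk_zero, jumps_comp_rev, Function.comp_apply, Fin.rev_last]
    _ = jumps f (W ∘ Fin.rev) := (jumps_comp_rev _ _).symm
    _ ≤ winst (t+1) f := by
      refine le_winst (hP.comp_rev.appendWalk (isGeodesic_cornerWalk b)).comp_rev ?_ (Or.inr ?_)
      · simp only [W, Function.comp_apply, Fin.rev_zero, appendWalk_last, Fin.rev_last,
          onesCount_append, hstart]
        rfl
      · simpa [W, appendWalk_zero] using hlast

end extension

lemma winst_restrict_add_one_le {t : ℕ} {f : (Fin (2*t+2+2) → Bool) → Bool}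
    (hf : Respects (t+1) f) :
    winst t (fun x => f (Fin.append x ![true, false])) + 1 ≤ winst (t+1) f := by
  obtain ⟨P, hP, hstart, hwell, hmax⟩ :=
    exists_winst_eq fun x => f (Fin.append x ![true, false])
  rw [hmax]
  cases hlast : f (Fin.append (P (Fin.last _)) ![true, false])
  · exact add_one_le_winst_of_last_false hf hP hstart hlast
  · exact add_one_le_winst_of_last_true hf hP hstart hlast (hwell.resolve_right (by simp [hlast]))

/-- If every colouring `f₀` of `H_{2t₀+2}` with `t_{f₀} = t₀` satisfies
`winst f₀ ≥ y₀`, then for every `t ≥ t₀`, every colouring `f` of `H_{2t+2}` with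
`t_f = t` satisfies `winst f ≥ y₀ + t - t₀`. -/
theorem winst_stronger (y0 t0 t : ℕ) (ht : t0 ≤ t)
    (h : ∀ f0 : (Fin (2 * t0 + 2) → Bool) → Bool, tfEq f0 t0 → y0 ≤ winst t0 f0) :
    ∀ f : (Fin (2 * t + 2) → Bool) → Bool, tfEq f t → y0 + (t - t0) ≤ winst t f := by
  obtain ⟨d, rfl⟩ := Nat.exists_eq_add_of_le ht
  rw [Nat.add_sub_cancel_left]
  induction d with
  | zero => exact h
  | succ d ih =>
    intro f hf
    have hrestrict := ih (Nat.le_add_right t0 d) _ ⟨hf.1.restrict, not_respects_succ _⟩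
    exact (Nat.add_le_add_right hrestrict 1).trans (winst_restrict_add_one_le hf.1)
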